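/- arXiv:2308.01247 — 4 statements merged into one kernel-verified Lean document; each statement's English description precedes it below -/
import Mathlib

section
/- Let α, β ∈ (0,1) be irrational numbers and n ∈ ℕ such that their n-th continued fraction convergents coincide: q_n^α = q_n^β =: q_n and p_n^α = p_n^β. Then for every k ∈ {1,...,q_n−1} there exists c_k ∈ {0,...,q_n−1} such that both kα mod 1 and kβ mod 1 lie in the open interval (c_k/q_n, (c_k+1)/q_n). -/
/-!
If `p/q` is the `n`-th convergent of `v`, then `v - p/q` is nonzero of sign `(-1)^n` and at most
`1/q²` in absolute value, so for `0 < k < q` the error `k v - k p/q` lies strictly between `0` and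
`(-1)^n/q`. Shifting the numerator `k p` down by one when `n` is odd therefore writes
`k v = m/q + δ` with `0 < δ < 1/q`, where `m` depends only on `k`, `p`, `q` and the parity of `n`;
hence `fract (k v)` lies in the cell `((m mod q)/q, (m mod q + 1)/q)`, the same for `α` and `β`.
-/

open GenContFract Set
open GenContFract (of)

variable {K : Type*} [Field K] [LinearOrder K] [IsStrictOrderedRing K] [FloorRing K]

theorem Int.fract_div_add_mem_Ioo {q : ℕ} (hq : 0 < q) (m : ℤ) {δ : K}
    (hδ : δ ∈ Ioo 0 (1 / (q : K))) :
    Int.fract ((m : K) / q + δ) ∈ Ioo (((m % q).toNat : K) / q) ((((m % q).toNat : K) + 1) / q) := by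
  have hq' : (0 : K) < q := by exact_mod_cast hq
  have hr0 : 0 ≤ m % q := Int.emod_nonneg m (by omega)
  have hrq : m % q + 1 ≤ q := Int.emod_lt_of_pos m (by omega)
  have hcast : ((m % q).toNat : K) = ((m % q : ℤ) : K) := by
    exact_mod_cast Int.toNat_of_nonneg hr0
  have hrq' : ((m % q : ℤ) : K) + 1 ≤ q := by exact_mod_cast hrq
  have hsplit : (m : K) / q + δ = ((m / q : ℤ) : K) + (((m % q : ℤ) : K) / q + δ) := by
    have : (m : K) = q * ((m / q : ℤ) : K) + ((m % q : ℤ) : K) := by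
      exact_mod_cast (Int.mul_ediv_add_emod m q).symm
    rw [this]; field_simp; ring
  have hlt : ((m % q : ℤ) : K) / q + δ < (((m % q : ℤ) : K) + 1) / q := by
    rw [add_div]; linarith [hδ.2]
  rw [hcast, hsplit, Int.fract_intCast_add, Int.fract_eq_self.2]
  · exact ⟨lt_add_of_pos_right _ hδ.1, hlt⟩
  · have hr0' : (0 : K) ≤ (m % q : ℤ) := by exact_mod_cast hr0
    refine ⟨add_nonneg (div_nonneg hr0' hq'.le) hδ.1.le, hlt.trans_le ?_⟩
    rwa [div_le_one hq']

namespace GenContFract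

variable {v : K} {n : ℕ}

theorem one_le_of_den : ∀ n, 1 ≤ (of v).dens n
  | 0 => zeroth_den_eq_one.ge
  | n + 1 => (one_le_of_den n).trans of_den_mono

theorem abs_sub_convs_le_one_div_den_sq (h : ¬(of v).TerminatedAt n) :
    |v - (of v).convs n| ≤ 1 / (of v).dens n ^ 2 := by
  have hpos : 0 < (of v).dens n := one_pos.trans_le (one_le_of_den n)
  refine (abs_sub_convs_le h).trans (one_div_le_one_div_of_le (by positivity) ?_)
  rw [sq]
  exact mul_le_mul_of_nonneg_left of_den_mono hpos.le

theorem neg_one_pow_mul_sub_convs_pos (h : ¬(of v).TerminatedAt n) :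
    0 < (-1) ^ n * (v - (of v).convs n) := by
  obtain ⟨ifp', hstream'⟩ := Option.ne_none_iff_exists'.1
    (mt of_terminatedAt_n_iff_succ_nth_intFractPair_stream_eq_none.2 h)
  obtain ⟨ifp, hstream, hfr, -⟩ := IntFractPair.succ_nth_stream_eq_some_iff.1 hstream'
  have hfr_pos : 0 < ifp.fr := (IntFractPair.nth_stream_fr_nonneg hstream).lt_of_ne' hfr
  have hB : 0 < ((of v).contsAux (n + 1)).b := by
    rw [← nth_cont_eq_succ_nth_contAux, ← den_eq_conts_b]
    exact one_pos.trans_le (one_le_of_den n)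
  have hpB : 0 ≤ ((of v).contsAux n).b := zero_le_of_contsAux_b
  rw [sub_convs_eq hstream, if_neg hfr, mul_div_assoc', ← pow_add, ← two_mul, pow_mul, neg_one_sq,
    one_pow]
  positivity

theorem exists_mul_eq_div_add (h : ¬(of v).TerminatedAt n) {q : ℕ} {p : ℤ}
    (hq : (q : K) = (of v).dens n) (hp : (p : K) = (of v).nums n) {k : ℕ} (hk0 : 0 < k)
    (hkq : k < q) :
    ∃ δ ∈ Ioo 0 (1 / (q : K)),
      (k : K) * v = ((k * p - if Even n then 0 else 1 : ℤ) : K) / q + δ := by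
  have hq0 : (0 : K) < q := by exact_mod_cast hk0.trans hkq
  have hconv : (of v).convs n = p / q := by rw [conv_eq_num_div_den, hp, hq]
  set ε := (k : K) * (v - p / q) with hε
  have hsign : 0 < (-1) ^ n * ε := by
    rw [hε, ← hconv, mul_left_comm]
    exact mul_pos (by exact_mod_cast hk0) (neg_one_pow_mul_sub_convs_pos h)
  have habs : |ε| < 1 / q :=
    calc |ε| = k * |v - (of v).convs n| := by rw [abs_mul, Nat.abs_cast, hconv]
      _ ≤ k * (1 / q ^ 2) := by gcongr; rw [hq]; exact abs_sub_convs_le_one_div_den_sq h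
      _ < q * (1 / q ^ 2) := by gcongr
      _ = 1 / q := by field_simp
  have hkv : (k : K) * v = ((k * p : ℤ) : K) / q + ε := by
    rw [hε]; push_cast; field_simp; ring
  rcases n.even_or_odd with he | ho
  · rw [he.neg_one_pow, one_mul] at hsign
    refine ⟨ε, ⟨hsign, (le_abs_self ε).trans_lt habs⟩, ?_⟩
    rw [if_pos he, sub_zero, hkv]
  · rw [ho.neg_one_pow, neg_one_mul] at hsign
    refine ⟨ε + 1 / q, ⟨by linarith [neg_abs_le ε], by linarith⟩, ?_⟩
    rw [if_neg (Nat.not_even_iff_odd.2 ho), hkv]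
    push_cast
    ring

end GenContFract

theorem Irrational.not_terminatedAt {v : ℝ} (hv : Irrational v) (n : ℕ) :
    ¬(of v).TerminatedAt n := fun h => by
  obtain ⟨q, rfl⟩ := (terminates_iff_rat v).1 ⟨n, h⟩
  exact hv ⟨q, rfl⟩

theorem stmt0_general (α β : ℝ) (hα : Irrational α) (hβ : Irrational β)
    (n : ℕ) (qn : ℕ) (pn : ℤ)
    (hqα : ((qn : ℝ)) = (GenContFract.of α).dens n)
    (hqβ : ((qn : ℝ)) = (GenContFract.of β).dens n)
    (hpα : ((pn : ℝ)) = (GenContFract.of α).nums n)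
    (hpβ : ((pn : ℝ)) = (GenContFract.of β).nums n) :
    ∀ k : ℕ, 1 ≤ k → k < qn → ∃ c : ℕ, c < qn ∧
      Int.fract ((k : ℝ) * α) ∈ Set.Ioo ((c : ℝ) / qn) (((c : ℝ) + 1) / qn) ∧
      Int.fract ((k : ℝ) * β) ∈ Set.Ioo ((c : ℝ) / qn) (((c : ℝ) + 1) / qn) := by
  intro k hk1 hkq
  have hq : 0 < qn := by omega
  obtain ⟨δα, hδα, hkα⟩ := exists_mul_eq_div_add (hα.not_terminatedAt n) hqα hpα hk1 hkq
  obtain ⟨δβ, hδβ, hkβ⟩ := exists_mul_eq_div_add (hβ.not_terminatedAt n) hqβ hpβ hk1 hkq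
  set m : ℤ := k * pn - if Even n then 0 else 1
  refine ⟨(m % qn).toNat, by have := Int.emod_lt_of_pos m (Int.natCast_pos.2 hq); omega, ?_, ?_⟩
  · rw [hkα]; exact Int.fract_div_add_mem_Ioo hq m hδα
  · rw [hkβ]; exact Int.fract_div_add_mem_Ioo hq m hδβ

theorem stmt0 (α β : ℝ) (hα : Irrational α) (hβ : Irrational β)
    (hα01 : α ∈ Set.Ioo (0:ℝ) 1) (hβ01 : β ∈ Set.Ioo (0:ℝ) 1)
    (n : ℕ) (qn : ℕ) (pn : ℤ)
    (hqα : ((qn : ℝ)) = (GenContFract.of α).dens n)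
    (hqβ : ((qn : ℝ)) = (GenContFract.of β).dens n)
    (hpα : ((pn : ℝ)) = (GenContFract.of α).nums n)
    (hpβ : ((pn : ℝ)) = (GenContFract.of β).nums n) :
    ∀ k : ℕ, 1 ≤ k → k < qn → ∃ c : ℕ, c < qn ∧
      Int.fract ((k : ℝ) * α) ∈ Set.Ioo ((c : ℝ) / qn) (((c : ℝ) + 1) / qn) ∧
      Int.fract ((k : ℝ) * β) ∈ Set.Ioo ((c : ℝ) / qn) (((c : ℝ) + 1) / qn) :=
  stmt0_general α β hα hβ n qn pn hqα hqβ hpα hpβ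
end

section
/- Let α be irrational with denominator sequence (q_n). For any increasing sequence (n_k) of even natural numbers, the series ∑_{s=1}^∞ ‖q_{n_s}α‖ converges, and moreover if 2q_{n_1} < q_{n_1+1} then for every k ≥ 0: ∑_{s=k+1}^∞ ‖q_{n_s}α‖ < 2/q_{n_{k+1}+1}. -/
/-- `nrm r` is the distance from the real number `r` to the nearest integer. -/
noncomputable def nrm (r : ℝ) : ℝ := ‖((r : ℝ) : AddCircle (1:ℝ))‖

lemma nrm_nonneg (r : ℝ) : 0 ≤ nrm r := norm_nonneg _

lemma nrm_le_int (r : ℝ) (z : ℤ) : nrm r ≤ |r - z| := by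
  have h : nrm r = |r - round r| := UnitAddCircle.norm_eq
  rw [h]
  exact round_le r z

open GenContFract (of)
open GenContFract

lemma not_term (α : ℝ) (hα : Irrational α) (m : ℕ) : ¬(of α).TerminatedAt m := by
  intro h
  obtain ⟨q', hq'⟩ := exists_rat_eq_of_terminates (v := α) ⟨m, h⟩
  exact hα ⟨q', hq'.symm⟩

lemma dens_one_le (α : ℝ) (hα : Irrational α) (m : ℕ) : (1 : ℝ) ≤ (of α).dens m := by
  have h := succ_nth_fib_le_of_nth_den (v := α) (n := m) (Or.inr (not_term α hα _))
  have h1 : (1 : ℕ) ≤ Nat.fib (m + 1) := Nat.fib_pos.mpr (Nat.succ_pos m)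
  calc (1 : ℝ) ≤ (Nat.fib (m + 1) : ℝ) := by exact_mod_cast h1
    _ ≤ _ := h

lemma dens_growth (α : ℝ) (hα : Irrational α) (m : ℕ) :
    (of α).dens m + (of α).dens (m + 1) ≤ (of α).dens (m + 2) := by
  obtain ⟨gp, hs⟩ : ∃ gp, (of α).s.get? (m + 1) = some gp :=
    Option.ne_none_iff_exists'.1 (not_term α hα (m + 1))
  have ha : gp.a = 1 := of_partNum_eq_one (partNum_eq_s_a hs)
  have hb : (1 : ℝ) ≤ gp.b := of_one_le_get?_partDen (partDen_eq_s_b hs)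
  have hrec := dens_recurrence hs (rfl : (of α).dens m = _) (rfl : (of α).dens (m + 1) = _)
  rw [hrec, ha, one_mul]
  have h0 : (0 : ℝ) ≤ (of α).dens (m + 1) := zero_le_of_den
  nlinarith

lemma dens_mono (α : ℝ) : Monotone fun m => (of α).dens m :=
  monotone_nat_of_le_succ fun _ => of_den_mono

lemma nums_int (α : ℝ) (hα : Irrational α) (m : ℕ) : ∃ z : ℤ, (of α).nums m = (z : ℝ) := by
  induction m using Nat.twoStepInduction with
  | zero => exact ⟨⌊α⌋, by rw [zeroth_num_eq_h, of_h_eq_floor]⟩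
  | one =>
      obtain ⟨gp, hs⟩ : ∃ gp, (of α).s.get? 0 = some gp :=
        Option.ne_none_iff_exists'.1 (not_term α hα 0)
      have ha : gp.a = 1 := of_partNum_eq_one (partNum_eq_s_a hs)
      obtain ⟨z, hz⟩ := exists_int_eq_of_partDen (partDen_eq_s_b hs)
      refine ⟨z * ⌊α⌋ + 1, ?_⟩
      rw [first_num_eq hs, ha, hz, of_h_eq_floor]
      push_cast
      ring
  | more _ ih1 ih2 =>
      obtain ⟨gp, hs⟩ : ∃ gp, (of α).s.get? (_ + 1) = some gp :=
        Option.ne_none_iff_exists'.1 (not_term α hα _)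
      have ha : gp.a = 1 := of_partNum_eq_one (partNum_eq_s_a hs)
      obtain ⟨z, hz⟩ := exists_int_eq_of_partDen (partDen_eq_s_b hs)
      obtain ⟨z1, hz1⟩ := ih1
      obtain ⟨z2, hz2⟩ := ih2
      refine ⟨z * z2 + z1, ?_⟩
      rw [nums_recurrence hs hz1 hz2, ha, hz]
      push_cast
      ring

lemma nrm_bound (α : ℝ) (hα : Irrational α) (m : ℕ) :
    nrm ((of α).dens m * α) ≤ 1 / (of α).dens (m + 1) := by
  obtain ⟨z, hz⟩ := nums_int α hα m
  have hB : (1 : ℝ) ≤ (of α).dens m := dens_one_le α hα m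
  have hB1 : (1 : ℝ) ≤ (of α).dens (m + 1) := dens_one_le α hα (m + 1)
  have habs := abs_sub_convs_le (v := α) (n := m) (not_term α hα m)
  have hconv : (of α).convs m = (of α).nums m / (of α).dens m := conv_eq_num_div_den
  have key : |(of α).dens m * α - z| ≤ 1 / (of α).dens (m + 1) := by
    have hBpos : (0 : ℝ) < (of α).dens m := lt_of_lt_of_le one_pos hB
    have heq : (of α).dens m * α - z = (of α).dens m * (α - (of α).convs m) := by
      rw [hconv, hz]
      field_simp
    have : |(of α).dens m * α - z| = (of α).dens m * |α - (of α).convs m| := by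
      rw [heq, abs_mul, abs_of_pos hBpos]
    rw [this]
    calc (of α).dens m * |α - (of α).convs m|
        ≤ (of α).dens m * (1 / ((of α).dens m * (of α).dens (m + 1))) := by
          exact mul_le_mul_of_nonneg_left habs hBpos.le
      _ = 1 / (of α).dens (m + 1) := by field_simp
  exact (nrm_le_int _ z).trans key

/-- geometric tail estimate -/
lemma key_lemma (d : ℕ → ℝ) (f : ℕ → ℝ) (hd0 : 0 < d 0)
    (hd : ∀ j, 2 * d j + 1 ≤ d (j + 1)) (hf0 : ∀ j, 0 ≤ f j)
    (hfd : ∀ j, f j ≤ 1 / d j) :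
    Summable f ∧ (∑' j, f j) < 2 / d 0 := by
  have hdpos : ∀ j, 0 < d j := by
    intro j
    induction j with
    | zero => exact hd0
    | succ j ih => nlinarith [hd j]
  have hdgeo : ∀ j, 2 ^ j * d 0 ≤ d j := by
    intro j
    induction j with
    | zero => simp
    | succ j ih =>
        have := hd j
        calc 2 ^ (j + 1) * d 0 = 2 * (2 ^ j * d 0) := by ring
          _ ≤ 2 * d j := by linarith
          _ ≤ d (j + 1) := by linarith
  set g : ℕ → ℝ := fun j => (1 / 2) ^ j * (1 / d 0) with hg
  have hfg : ∀ j, f j ≤ g j := by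
    intro j
    refine (hfd j).trans ?_
    have h2 : (0 : ℝ) < 2 ^ j * d 0 := by positivity
    have : 1 / d j ≤ 1 / (2 ^ j * d 0) := by
      apply one_div_le_one_div_of_le h2 (hdgeo j)
    calc 1 / d j ≤ 1 / (2 ^ j * d 0) := this
      _ = (1 / 2) ^ j * (1 / d 0) := by
          rw [div_pow, one_pow, div_mul_div_comm, one_mul]
  have hgs : Summable g := by
    apply Summable.mul_right
    exact summable_geometric_of_lt_one (by norm_num) (by norm_num)
  have hgsum : (∑' j, g j) = 2 / d 0 := by
    rw [hg]
    rw [tsum_mul_right, tsum_geometric_of_lt_one (by norm_num) (by norm_num)]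
    rw [mul_one_div]
    norm_num
  have hstrict : f 1 < g 1 := by
    have hd1 : 2 * d 0 < d 1 := by linarith [hd 0]
    have h2d0 : (0 : ℝ) < 2 * d 0 := by linarith
    have : 1 / d 1 < 1 / (2 * d 0) := by
      apply one_div_lt_one_div_of_lt h2d0 hd1
    refine lt_of_le_of_lt (hfd 1) (lt_of_lt_of_le this ?_)
    rw [hg]
    simp only [pow_one]
    rw [div_mul_div_comm, one_mul]
  have hsum : Summable f := Summable.of_nonneg_of_le hf0 hfg hgs
  refine ⟨hsum, ?_⟩
  calc (∑' j, f j) < ∑' j, g j := Summable.tsum_lt_tsum_of_nonneg hf0 hfg hstrict hgs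
    _ = 2 / d 0 := hgsum

/- STATEMENT 4: For irrational α with denominators (q_n) and any increasing sequence
(n_k) of even naturals (indexed from 1), the series ∑_{s=1}^∞ ‖q_{n_s}α‖ converges; and
if 2q_{n_1} < q_{n_1+1}, then for every k ≥ 0, ∑_{s=k+1}^∞ ‖q_{n_s}α‖ < 2/q_{n_{k+1}+1}. -/
theorem stmt4 (α : ℝ) (hα : Irrational α) (q : ℕ → ℕ)
    (hq : ∀ m, ((q m : ℝ)) = (GenContFract.of α).dens m)
    (n : ℕ → ℕ) (hmono : StrictMono n) (heven : ∀ k, Even (n k)) :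
    Summable (fun s : ℕ => nrm ((q (n (s + 1)) : ℝ) * α)) ∧
    (2 * q (n 1) < q (n 1 + 1) →
      ∀ k : ℕ,
        (∑' s : ℕ, nrm ((q (n (k + 1 + s)) : ℝ) * α)) < 2 / (q (n (k + 1) + 1) : ℝ)) := by
  -- basic facts about q
  have hq1 : ∀ m, (1 : ℝ) ≤ (q m : ℝ) := fun m => (hq m) ▸ dens_one_le α hα m
  have hqmono : ∀ {a b : ℕ}, a ≤ b → (q a : ℝ) ≤ (q b : ℝ) := by
    intro a b hab
    rw [hq a, hq b]
    exact dens_mono α hab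
  -- key growth across the subsequence: 2 q(n s + 1) + 1 ≤ q (n (s+1) + 1)
  have hkey : ∀ s : ℕ, 2 * (q (n s + 1) : ℝ) + 1 ≤ (q (n (s + 1) + 1) : ℝ) := by
    intro s
    have hlt : n s < n (s + 1) := hmono (Nat.lt_succ_self s)
    have hstep : n s + 2 ≤ n (s + 1) := by
      obtain ⟨a, ha⟩ := heven s
      obtain ⟨b, hb⟩ := heven (s + 1)
      omega
    have h1 : (q (n s) : ℝ) + (q (n s + 1) : ℝ) ≤ (q (n s + 2) : ℝ) := by
      rw [hq, hq, hq]; exact dens_growth α hα (n s)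
    have h2 : (q (n s + 1) : ℝ) + (q (n s + 2) : ℝ) ≤ (q (n s + 3) : ℝ) := by
      rw [hq, hq, hq]; exact dens_growth α hα (n s + 1)
    have h3 : (q (n s + 3) : ℝ) ≤ (q (n (s + 1) + 1) : ℝ) := by
      apply hqmono; omega
    have h4 : (1 : ℝ) ≤ (q (n s) : ℝ) := hq1 _
    linarith
  -- the norm bound in terms of q
  have hbnd : ∀ m, nrm ((q m : ℝ) * α) ≤ 1 / (q (m + 1) : ℝ) := by
    intro m
    rw [hq m, hq (m + 1)]
    exact nrm_bound α hα m
  -- part 1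
  have part1 := key_lemma (fun j => (q (n (j + 1) + 1) : ℝ))
    (fun j => nrm ((q (n (j + 1)) : ℝ) * α))
    (lt_of_lt_of_le one_pos (hq1 _))
    (fun j => hkey (j + 1)) (fun j => nrm_nonneg _) (fun j => hbnd _)
  refine ⟨part1.1, fun _ k => ?_⟩
  have part2 := key_lemma (fun j => (q (n (k + 1 + j) + 1) : ℝ))
    (fun j => nrm ((q (n (k + 1 + j)) : ℝ) * α))
    (lt_of_lt_of_le one_pos (hq1 _))
    (fun j => hkey (k + 1 + j))
    (fun j => nrm_nonneg _) (fun j => hbnd _)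
  exact part2.2
end

section
/- Let α be irrational with denominator sequence (q_n) and suppose 2q_{n_1} < q_{n_1+1} for an increasing sequence of even numbers (n_k). Then for every m ∈ ℕ: 2∑_{s=1}^m ‖q_{n_s}α‖ < 4/5 < 1. -/
open GenContFract (of)

lemma nrm_le_abs_sub_int (x : ℝ) (z : ℤ) : nrm x ≤ |x - z| := by
  calc nrm x = |x - round x| := by rw [nrm, AddCircle.norm_eq]; simp
    _ ≤ |x - z| := round_le x z

lemma Nat.add_two_le_of_even_of_lt {a b : ℕ} (ha : Even a) (hb : Even b) (h : a < b) :
    a + 2 ≤ b := by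
  obtain ⟨i, rfl⟩ := ha
  obtain ⟨j, rfl⟩ := hb
  omega

lemma two_pow_mul_le_of_add_two_le {R : Type*} [Semiring R] [PartialOrder R] [IsOrderedRing R]
    {D : ℕ → R} (hD : Monotone D) (hstep : ∀ k, 2 * D k ≤ D (k + 2))
    {n : ℕ → ℕ} (hgap : ∀ s, n s + 2 ≤ n (s + 1)) (i k : ℕ) :
    2 ^ k * D (n i) ≤ D (n (i + k)) := by
  induction k with
  | zero => simp
  | succ k ih =>
    calc 2 ^ (k + 1) * D (n i) = 2 * (2 ^ k * D (n i)) := by rw [pow_succ', mul_assoc]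
      _ ≤ 2 * D (n (i + k)) := mul_le_mul_of_nonneg_left ih zero_le_two
      _ ≤ D (n (i + k) + 2) := hstep _
      _ ≤ D (n (i + (k + 1))) := hD (hgap _)

lemma sum_Icc_one_half_pow (m : ℕ) : ∑ s ∈ Finset.Icc 1 m, (1 / 2 : ℝ) ^ s = 1 - (1 / 2) ^ m := by
  induction m with
  | zero => simp
  | succ m ih =>
    rw [Finset.sum_Icc_succ_top (by omega), ih]
    ring

namespace GenContFract

variable {K : Type*} [Field K] [LinearOrder K] [FloorRing K] {v : K}

theorem exists_int_eq_contsAux_a (v : K) (n : ℕ) : ∃ z : ℤ, ((of v).contsAux n).a = z := by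
  induction n using Nat.twoStepInduction with
  | zero => exact ⟨1, by simp [contsAux]⟩
  | one => exact ⟨⌊v⌋, by simp [contsAux, of_h_eq_floor]⟩
  | more n ih₀ ih₁ =>
    obtain ⟨z₀, hz₀⟩ := ih₀
    obtain ⟨z₁, hz₁⟩ := ih₁
    cases hs : (of v).s.get? n with
    | none => exact ⟨z₁, by simp [contsAux, hs, hz₁]⟩
    | some gp =>
      obtain ⟨b, hb⟩ := exists_int_eq_of_partDen (partDen_eq_s_b hs)
      refine ⟨b * z₁ + z₀, ?_⟩
      rw [contsAux_recurrence hs rfl rfl, of_partNum_eq_one (partNum_eq_s_a hs), hb, hz₀, hz₁]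
      push_cast
      ring

theorem exists_int_eq_nums (v : K) (n : ℕ) : ∃ z : ℤ, (of v).nums n = z :=
  exists_int_eq_contsAux_a v (n + 1)

variable [IsStrictOrderedRing K]

theorem dens_monotone : Monotone (of v).dens :=
  monotone_nat_of_le_succ fun _ => of_den_mono

theorem one_le_dens (n : ℕ) : 1 ≤ (of v).dens n := by
  simpa using dens_monotone (v := v) (Nat.zero_le n)

theorem dens_add_dens_succ_le {n : ℕ} (h : ¬(of v).TerminatedAt (n + 1)) :
    (of v).dens n + (of v).dens (n + 1) ≤ (of v).dens (n + 2) := by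
  obtain ⟨gp, hs⟩ := Option.ne_none_iff_exists'.mp h
  rw [dens_recurrence hs rfl rfl, of_partNum_eq_one (partNum_eq_s_a hs)]
  have hb : 1 ≤ gp.b := of_one_le_get?_partDen (partDen_eq_s_b hs)
  nlinarith [one_le_dens (v := v) (n + 1)]

theorem two_mul_dens_le {n : ℕ} (h : ¬(of v).TerminatedAt (n + 1)) :
    2 * (of v).dens n ≤ (of v).dens (n + 2) := by
  linarith [dens_add_dens_succ_le h, of_den_mono (v := v) (n := n)]

theorem two_le_dens {n : ℕ} (h : ¬(of v).TerminatedAt 1) (hn : 2 ≤ n) : 2 ≤ (of v).dens n := by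
  have h₂ : 2 ≤ (of v).dens 2 := by
    linarith [dens_add_dens_succ_le (n := 0) h, one_le_dens (v := v) 1,
      zeroth_den_eq_one (g := of v)]
  exact h₂.trans (dens_monotone hn)

theorem two_pow_mul_dens_succ_le (h : ∀ k, ¬(of v).TerminatedAt k) {n : ℕ → ℕ}
    (hgap : ∀ s, n s + 2 ≤ n (s + 1)) (i t : ℕ) :
    2 ^ t * (of v).dens (n i + 1) ≤ (of v).dens (n (i + t) + 1) :=
  two_pow_mul_le_of_add_two_le dens_monotone (fun k => two_mul_dens_le (h (k + 1)))
    (n := fun s => n s + 1) (fun s => by have := hgap s; omega) i t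

theorem abs_dens_mul_sub_nums_le {n : ℕ} (h : ¬(of v).TerminatedAt n) :
    |(of v).dens n * v - (of v).nums n| ≤ 1 / (of v).dens (n + 1) := by
  have hpos : 0 < (of v).dens n := zero_lt_one.trans_le (one_le_dens n)
  have hconv : (of v).dens n * v - (of v).nums n = (of v).dens n * (v - (of v).convs n) := by
    rw [conv_eq_num_div_den]
    field_simp
  rw [hconv, abs_mul, abs_of_pos hpos]
  calc (of v).dens n * |v - (of v).convs n|
      ≤ (of v).dens n * (1 / ((of v).dens n * (of v).dens (n + 1))) := by
        gcongr; exact abs_sub_convs_le h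
    _ = 1 / (of v).dens (n + 1) := by field_simp

theorem not_terminatedAt_of_irrational {α : ℝ} (hα : Irrational α) (n : ℕ) :
    ¬(of α).TerminatedAt n := fun hn =>
  let ⟨r, hr⟩ := (terminates_iff_rat α).mp ⟨n, hn⟩
  hα ⟨r, hr.symm⟩

theorem nrm_dens_mul_le {α : ℝ} {n : ℕ} (h : ¬(of α).TerminatedAt n) :
    nrm ((of α).dens n * α) ≤ 1 / (of α).dens (n + 1) := by
  obtain ⟨z, hz⟩ := exists_int_eq_nums α n
  exact (nrm_le_abs_sub_int _ z).trans (hz ▸ abs_dens_mul_sub_nums_le h)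

end GenContFract

theorem stmt5 (α : ℝ) (hα : Irrational α) (q : ℕ → ℕ)
    (hq : ∀ m, ((q m : ℝ)) = (GenContFract.of α).dens m)
    (n : ℕ → ℕ) (hmono : StrictMono n) (heven : ∀ k, Even (n k))
    (h1 : 2 * q (n 1) < q (n 1 + 1)) :
    ∀ m : ℕ, 2 * (∑ s ∈ Finset.Icc 1 m, nrm ((q (n s) : ℝ) * α)) < 4 / 5 ∧
      (4 : ℝ) / 5 < 1 := by
  intro m
  refine ⟨?_, by norm_num⟩
  have hnt := GenContFract.not_terminatedAt_of_irrational hα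
  have hgap : ∀ s, n s + 2 ≤ n (s + 1) := fun s =>
    Nat.add_two_le_of_even_of_lt (heven s) (heven (s + 1)) (hmono s.lt_succ_self)
  have hq₁ : 2 ≤ q (n 1) := by
    have hn₁ := Nat.add_two_le_of_even_of_lt (heven 0) (heven 1) (hmono zero_lt_one)
    exact_mod_cast (hq _).symm ▸ GenContFract.two_le_dens (hnt 1) (by omega)
  have h₅ : (5 : ℝ) ≤ (of α).dens (n 1 + 1) := by
    rw [← hq]; exact_mod_cast (by omega : 5 ≤ q (n 1 + 1))
  have hterm : ∀ s ∈ Finset.Icc 1 m, nrm ((q (n s) : ℝ) * α) ≤ 2 / 5 * (1 / 2) ^ s := by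
    intro s hs
    obtain ⟨t, rfl⟩ := Nat.exists_eq_add_of_le (Finset.mem_Icc.mp hs).1
    have hgrowth := GenContFract.two_pow_mul_dens_succ_le hnt hgap 1 t
    rw [hq]
    refine (GenContFract.nrm_dens_mul_le (hnt _)).trans ?_
    calc 1 / (of α).dens (n (1 + t) + 1) ≤ 1 / (2 ^ t * 5) :=
          one_div_le_one_div_of_le (by positivity) (hgrowth.trans' (by gcongr))
      _ = 2 / 5 * (1 / 2) ^ (1 + t) := by rw [one_div_pow, pow_add]; field_simp
  calc 2 * ∑ s ∈ Finset.Icc 1 m, nrm ((q (n s) : ℝ) * α)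
      ≤ 2 * ∑ s ∈ Finset.Icc 1 m, 2 / 5 * (1 / 2 : ℝ) ^ s := by
        gcongr with s hs; exact hterm s hs
    _ = 4 / 5 * (1 - (1 / 2) ^ m) := by rw [← Finset.mul_sum, sum_Icc_one_half_pow]; ring
    _ < 4 / 5 := by linarith [pow_pos (one_half_pos (α := ℝ)) m]
end

section
/- Let E ⊂ 𝕋 be a disjoint union of N intervals [λ_k, ρ_k), k = 1,...,N, such that δ ≤ λ_k < ρ_k ≤ 1 − δ for some δ > 0, the λ_k's are pairwise at distance ≥ s apart, and the ρ_k's are pairwise at distance ≥ s apart. Then the total variation of the function x ↦ χ_E(x)/‖x‖ on 𝕋 is at most 4/δ + 4∑_{k=1}^{N−1} 1/(ks) ≤ 4/δ + (4/s)(1 + log N). -/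
open scoped Classical

open Set

/-! ### Auxiliary lemmas on `eVariationOn` -/

private lemma evar_zero_on (f : ℝ → ℝ) (s : Set ℝ) (h : ∀ x ∈ s, f x = 0) :
    eVariationOn f s = 0 := by
  apply eVariationOn.constant_on
  rintro a ⟨x, hx, rfl⟩ b ⟨y, hy, rfl⟩
  rw [h x hx, h y hy]

private lemma evar_add_le (f g : ℝ → ℝ) (s : Set ℝ) :
    eVariationOn (fun x => f x + g x) s ≤ eVariationOn f s + eVariationOn g s := by
  unfold eVariationOn
  refine iSup_le fun p => ?_
  refine le_trans ?_ (add_le_add (le_iSup _ p) (le_iSup _ p))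
  rw [← Finset.sum_add_distrib]
  exact Finset.sum_le_sum fun i _ => edist_add_add_le _ _ _ _

private lemma evar_sub_le (f g : ℝ → ℝ) (s : Set ℝ) :
    eVariationOn (fun x => f x - g x) s ≤ eVariationOn f s + eVariationOn g s := by
  unfold eVariationOn
  refine iSup_le fun p => ?_
  refine le_trans ?_ (add_le_add (le_iSup _ p) (le_iSup _ p))
  rw [← Finset.sum_add_distrib]
  refine Finset.sum_le_sum fun i _ => ?_
  simp only [sub_eq_add_neg]
  refine le_trans (edist_add_add_le _ _ _ _) ?_
  rw [edist_neg_neg]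

private lemma evar_sum_le {ι : Type*} (T : Finset ι) (F : ι → ℝ → ℝ) (s : Set ℝ) :
    eVariationOn (fun x => ∑ k ∈ T, F k x) s ≤ ∑ k ∈ T, eVariationOn (F k) s := by
  classical
  induction T using Finset.cons_induction with
  | empty =>
      simp only [Finset.sum_empty]
      exact le_of_eq (evar_zero_on _ _ fun x _ => rfl)
  | cons a T ha ih =>
      simp only [Finset.sum_cons]
      exact le_trans (evar_add_le _ _ s) (add_le_add le_rfl ih)

private lemma evar_neg (f : ℝ → ℝ) (s : Set ℝ) :
    eVariationOn (fun x => -(f x)) s = eVariationOn f s := by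
  unfold eVariationOn
  simp only [edist_neg_neg]

private lemma mono_var {f : ℝ → ℝ} {a b : ℝ} (hab : a ≤ b) (hf : MonotoneOn f (Icc a b)) :
    eVariationOn f (Icc a b) ≤ ENNReal.ofReal (f b - f a) := by
  have := hf.eVariationOn_le (Set.left_mem_Icc.2 hab) (Set.right_mem_Icc.2 hab)
  rwa [Set.inter_self] at this

private lemma anti_var {f : ℝ → ℝ} {a b : ℝ} (hab : a ≤ b) (hf : AntitoneOn f (Icc a b)) :
    eVariationOn f (Icc a b) ≤ ENNReal.ofReal (f a - f b) := by
  have hm : MonotoneOn (fun x => -(f x)) (Icc a b) := fun x hx y hy hxy =>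
    neg_le_neg (hf hx hy hxy)
  have h2 := mono_var hab hm
  rw [evar_neg] at h2
  have h3 : -f b - -f a = f a - f b := by ring
  rwa [h3] at h2

private lemma ofReal_add_le_ofReal {a b c : ℝ} (ha : 0 ≤ a) (hb : 0 ≤ b) (h : a + b ≤ c) :
    ENNReal.ofReal a + ENNReal.ofReal b ≤ ENNReal.ofReal c := by
  rw [← ENNReal.ofReal_add ha hb]; exact ENNReal.ofReal_le_ofReal h

private lemma ofReal3 {a b c e : ℝ} (ha : 0 ≤ a) (hb : 0 ≤ b) (hc : 0 ≤ c)
    (h : a + b + c ≤ e) :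
    ENNReal.ofReal a + (ENNReal.ofReal b + ENNReal.ofReal c) ≤ ENNReal.ofReal e := by
  rw [← ENNReal.ofReal_add hb hc, ← ENNReal.ofReal_add ha (by positivity)]
  exact ENNReal.ofReal_le_ofReal (by linarith)

private lemma ofReal4 {a b c d e : ℝ} (ha : 0 ≤ a) (hb : 0 ≤ b) (hc : 0 ≤ c) (hd : 0 ≤ d)
    (h : a + b + c + d ≤ e) :
    ENNReal.ofReal a + (ENNReal.ofReal b + (ENNReal.ofReal c + ENNReal.ofReal d)) ≤
      ENNReal.ofReal e := by
  rw [← ENNReal.ofReal_add hc hd, ← ENNReal.ofReal_add hb (by positivity),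
    ← ENNReal.ofReal_add ha (by positivity)]
  exact ENNReal.ofReal_le_ofReal (by linarith)

/-! ### Norm on the unit circle -/

private lemma norm_val {x : ℝ} (h0 : 0 ≤ x) (h1 : x ≤ 1) :
    ‖((x : ℝ) : AddCircle (1:ℝ))‖ = min x (1 - x) := by
  rw [AddCircle.norm_eq]
  simp only [inv_one, one_mul, mul_one]
  rcases lt_or_ge x (1/2) with hx | hx
  · have hr : round x = 0 := round_eq_zero_iff.2 ⟨by linarith, by simpa using hx⟩
    rw [hr]
    push_cast
    rw [sub_zero, abs_of_nonneg h0, min_eq_left (by linarith)]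
  · have hr : round x = 1 := by
      rw [round_eq]
      exact Int.floor_eq_iff.2 ⟨by push_cast; linarith, by push_cast; linarith⟩
    rw [hr]
    push_cast
    rw [abs_of_nonpos (by linarith), min_eq_right (by linarith)]
    ring

/-! ### Variation of the restriction of `1/‖x‖` to a single interval -/

private lemma varF_nonneg (a b : ℝ) (x : ℝ) :
    0 ≤ (if x ∈ Set.Ico a b then ‖((x : ℝ) : AddCircle (1:ℝ))‖⁻¹ else 0) := by
  split <;> positivity

private lemma varLeft {a b m : ℝ} (ha : 0 < a) (ham : a ≤ m) (hm : m ≤ 1/2) (hmb : m ≤ b) :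
    AntitoneOn (fun x => if x ∈ Set.Ico a b then ‖((x : ℝ) : AddCircle (1:ℝ))‖⁻¹ else 0)
      (Icc a m) := by
  intro x hx y hy hxy
  have hx1 := hx.1
  have hx2 := hx.2
  have hy1 := hy.1
  have hy2 := hy.2
  by_cases hyI : y ∈ Set.Ico a b
  · have hxI : x ∈ Set.Ico a b := ⟨hx.1, lt_of_le_of_lt hxy hyI.2⟩
    simp only [if_pos hyI, if_pos hxI]
    rw [norm_val (by linarith) (by linarith),
      norm_val (by linarith) (by linarith)]
    rw [min_eq_left (by linarith), min_eq_left (by linarith)]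
    exact inv_anti₀ (lt_of_lt_of_le ha hx.1) hxy
  · simp only [if_neg hyI]
    exact varF_nonneg a b x

private lemma varRight {a b m : ℝ} (ham : a ≤ m) (hm : 1/2 ≤ m) (hmb : m ≤ b) (hb1 : b < 1) :
    eVariationOn (fun x => if x ∈ Set.Ico a b then ‖((x : ℝ) : AddCircle (1:ℝ))‖⁻¹ else 0)
        (Icc m b)
      ≤ ENNReal.ofReal ((1-b)⁻¹ - (1-m)⁻¹) + ENNReal.ofReal ((1-b)⁻¹) := by
  set F : ℝ → ℝ := fun x => if x ∈ Set.Ico a b then ‖((x : ℝ) : AddCircle (1:ℝ))‖⁻¹ else 0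
    with hF
  set u : ℝ → ℝ := fun x => (1-x)⁻¹ with hu
  set v : ℝ → ℝ := fun x => if x < b then 0 else (1-b)⁻¹ with hv
  have heq : EqOn F (fun x => u x - v x) (Icc m b) := by
    intro x hx
    by_cases hxb : x < b
    · have hxI : x ∈ Set.Ico a b := ⟨le_trans ham hx.1, hxb⟩
      simp only [hF, hu, hv, if_pos hxI, if_pos hxb, sub_zero]
      rw [norm_val (by linarith [hx.1]) (by linarith)]
      rw [min_eq_right (by linarith [hx.1])]
    · have hxb' : x = b := le_antisymm hx.2 (not_lt.1 hxb)
      have hxI : x ∉ Set.Ico a b := fun h => hxb h.2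
      show (if x ∈ Set.Ico a b then ‖((x : ℝ) : AddCircle (1:ℝ))‖⁻¹ else 0) =
        (1 - x)⁻¹ - (if x < b then 0 else (1 - b)⁻¹)
      rw [if_neg hxI, if_neg hxb, hxb']
      ring
  have hb0 : (0:ℝ) ≤ (1 - b)⁻¹ := by
    have h : (0:ℝ) < 1 - b := by linarith
    positivity
  rw [eVariationOn.eq_of_eqOn heq]
  refine le_trans (evar_sub_le u v (Icc m b)) (add_le_add ?_ ?_)
  · have hmono : MonotoneOn u (Icc m b) := by
      intro x hx y hy hxy
      simp only [hu]
      exact inv_anti₀ (by linarith [hy.2]) (by linarith)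
    have h2 := mono_var hmb hmono
    simpa [hu] using h2
  · have hmono : MonotoneOn v (Icc m b) := by
      intro x hx y hy hxy
      simp only [hv]
      by_cases hx' : x < b
      · rw [if_pos hx']
        split
        · exact le_rfl
        · exact hb0
      · have hy' : ¬ y < b := fun h => hx' (lt_of_le_of_lt hxy h)
        rw [if_neg hx', if_neg hy']
    have h2 := mono_var hmb hmono
    have hvb : v b = (1-b)⁻¹ := by simp only [hv, if_neg (lt_irrefl b)]
    have hvm : 0 ≤ v m := by
      simp only [hv]
      split
      · exact le_rfl
      · exact hb0
    refine le_trans h2 (ENNReal.ofReal_le_ofReal ?_)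
    rw [hvb]; linarith

private lemma varIco (a b : ℝ) (ha : 0 < a) (hab : a < b) (hb1 : b < 1) :
    eVariationOn (fun x => if x ∈ Set.Ico a b then ‖((x : ℝ) : AddCircle (1:ℝ))‖⁻¹ else 0)
        (Set.Icc 0 1)
      ≤ ENNReal.ofReal (2 * ((if a ≤ 1/2 then a⁻¹ else 0) + (if 1/2 ≤ b then (1-b)⁻¹ else 0))) := by
  set F : ℝ → ℝ := fun x => if x ∈ Set.Ico a b then ‖((x : ℝ) : AddCircle (1:ℝ))‖⁻¹ else 0
    with hF
  have hFnn : ∀ x, 0 ≤ F x := varF_nonneg a b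
  have key : ∀ {x y z : ℝ}, x ≤ y → y ≤ z →
      eVariationOn F (Icc x z) = eVariationOn F (Icc x y) + eVariationOn F (Icc y z) := by
    intro x y z hxy hyz
    have := eVariationOn.Icc_add_Icc F (s := Set.univ) hxy hyz (Set.mem_univ y)
    simpa [Set.univ_inter] using this.symm
  have hFa : F a = ‖((a : ℝ) : AddCircle (1:ℝ))‖⁻¹ := if_pos ⟨le_rfl, hab⟩
  have hF0 : F 0 = 0 := if_neg (fun h => absurd h.1 (not_le.2 ha))
  have hFb : F b = 0 := if_neg (fun h => absurd h.2 (lt_irrefl b))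
  have h1b : (0:ℝ) < 1 - b := by linarith
  have h1a : (0:ℝ) < 1 - a := by linarith
  have hd : (0:ℝ) ≤ if 1/2 ≤ b then (1-b)⁻¹ else 0 := by
    split
    · positivity
    · exact le_rfl
  have hc : (0:ℝ) ≤ if a ≤ 1/2 then a⁻¹ else 0 := by
    split
    · positivity
    · exact le_rfl
  have v1 : eVariationOn F (Icc 0 a) ≤ ENNReal.ofReal (F a) := by
    have hmono : MonotoneOn F (Icc 0 a) := by
      intro x hx y hy hxy
      by_cases hxI : x ∈ Set.Ico a b
      · have hxa : x = a := le_antisymm hx.2 hxI.1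
        have hya : y = a := le_antisymm hy.2 (hxa ▸ hxy)
        rw [hxa, hya]
      · show F x ≤ F y
        rw [hF]
        simp only
        rw [if_neg hxI]
        exact hFnn y
    have h2 := mono_var ha.le hmono
    rwa [hF0, sub_zero] at h2
  have v4 : eVariationOn F (Icc b 1) = 0 :=
    evar_zero_on F _ (fun x hx => if_neg (fun h => absurd h.2 (not_lt.2 hx.1)))
  have hsplit : eVariationOn F (Icc 0 1) =
      eVariationOn F (Icc 0 a) + eVariationOn F (Icc a b) + eVariationOn F (Icc b 1) := by
    rw [key ha.le (by linarith : a ≤ (1:ℝ)), key hab.le hb1.le, add_assoc]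
  rw [hsplit, v4, add_zero]
  rcases le_or_gt b (1/2) with hb2 | hb2
  · -- Case A : the interval is to the left of 1/2
    have ha2 : a ≤ 1/2 := by linarith
    have hga : F a = a⁻¹ := by
      rw [hFa, norm_val ha.le (by linarith), min_eq_left (by linarith)]
    have v2 : eVariationOn F (Icc a b) ≤ ENNReal.ofReal (F a) := by
      have h2 := anti_var hab.le (varLeft ha hab.le hb2 le_rfl)
      rw [← hF] at h2
      refine le_trans h2 (ENNReal.ofReal_le_ofReal ?_)
      have hmemA : a ∈ Set.Ico a b := ⟨le_rfl, hab⟩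
      have hmemB : b ∉ Set.Ico a b := fun h => lt_irrefl b h.2
      rw [hFa, if_pos hmemA, if_neg hmemB, sub_zero]
    refine le_trans (add_le_add v1 v2) ?_
    rw [hga, if_pos ha2]
    refine ofReal_add_le_ofReal (by positivity) (by positivity) ?_
    linarith
  · rcases le_or_gt (1/2) a with ha2 | ha2
    · -- Case B : the interval is to the right of 1/2
      have hga : F a = (1-a)⁻¹ := by
        rw [hFa, norm_val ha.le (by linarith), min_eq_right (by linarith)]
      have v2 := varRight (le_refl a) ha2 hab.le hb1
      rw [← hF] at v2
      refine le_trans (add_le_add v1 v2) ?_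
      rw [hga, if_pos hb2.le]
      have h2 : (0:ℝ) ≤ (1-b)⁻¹ - (1-a)⁻¹ := by
        have := inv_anti₀ (by linarith : (0:ℝ) < 1 - b) (by linarith : 1-b ≤ 1-a)
        linarith
      refine ofReal3 (by positivity) h2 (by positivity) ?_
      linarith [hc]
    · -- Case C : the interval straddles 1/2
      have hmid : F (1/2) = 2 := by
        show (if (1/2:ℝ) ∈ Set.Ico a b then ‖(((1/2:ℝ)) : AddCircle (1:ℝ))‖⁻¹ else 0) = 2
        rw [if_pos ⟨ha2.le, hb2⟩, norm_val (by norm_num) (by norm_num)]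
        norm_num
      have hga : F a = a⁻¹ := by
        rw [hFa, norm_val ha.le (by linarith), min_eq_left (by linarith)]
      have v23 : eVariationOn F (Icc a b) =
          eVariationOn F (Icc a (1/2)) + eVariationOn F (Icc (1/2) b) :=
        key ha2.le hb2.le
      have v2 : eVariationOn F (Icc a (1/2)) ≤ ENNReal.ofReal (F a - 2) := by
        have h2 := anti_var ha2.le (varLeft ha ha2.le le_rfl hb2.le)
        rw [← hF] at h2
        refine le_trans h2 (ENNReal.ofReal_le_ofReal ?_)
        have hmemA : a ∈ Set.Ico a b := ⟨le_rfl, hab⟩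
        have hmemH : (1/2:ℝ) ∈ Set.Ico a b := ⟨ha2.le, hb2⟩
        have hna : ‖((a : ℝ) : AddCircle (1:ℝ))‖⁻¹ = a⁻¹ := by rw [← hFa, hga]
        have hn2 : ‖(((1/2:ℝ)) : AddCircle (1:ℝ))‖⁻¹ = 2 := by
          rw [norm_val (by norm_num) (by norm_num)]
          norm_num
        rw [hga, if_pos hmemA, if_pos hmemH, hna, hn2]
      have v3 := varRight (a := a) ha2.le (le_refl (1/2)) hb2.le hb1
      rw [← hF] at v3
      have hm2 : ((1:ℝ) - 1/2)⁻¹ = 2 := by norm_num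
      rw [hm2] at v3
      rw [v23]
      refine le_trans (add_le_add v1 (add_le_add v2 v3)) ?_
      rw [hga, if_pos ha2.le, if_pos hb2.le]
      clear hmid
      have h2 : (2:ℝ) ≤ a⁻¹ := by
        rw [show (2:ℝ) = (1/2)⁻¹ by norm_num]
        exact inv_anti₀ ha ha2.le
      have h3 : (2:ℝ) ≤ (1-b)⁻¹ := by
        rw [show (2:ℝ) = (1/2)⁻¹ by norm_num]
        exact inv_anti₀ (by linarith) (by linarith)
      refine ofReal4 (by positivity) (by linarith) (by linarith) (by positivity) ?_
      linarith

/-! ### Sums over separated families -/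

private lemma sep_sum_aux {ι : Type*} [DecidableEq ι] :
    ∀ (m : ℕ) (T : Finset ι) (v : ι → ℝ) (δ : ℝ), T.card = m → 0 < δ →
      ∀ (s : ℝ), 0 < s → (∀ k ∈ T, δ ≤ v k) →
      (∀ k ∈ T, ∀ k' ∈ T, k ≠ k' → s ≤ |v k - v k'|) →
      ∑ k ∈ T, (v k)⁻¹ ≤ ∑ j ∈ Finset.range m, (δ + j * s)⁻¹ := by
  intro m
  induction m with
  | zero =>
      intro T v δ hcard _ s _ _ _
      rw [Finset.card_eq_zero] at hcard
      subst hcard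
      simp
  | succ n ih =>
      intro T v δ hcard hδ s hs hv hsep
      have hne : T.Nonempty := Finset.card_pos.mp (by omega)
      obtain ⟨k₀, hk₀, hmin⟩ := T.exists_min_image v hne
      have hv0 : δ ≤ v k₀ := hv _ hk₀
      have hstep : ∀ k ∈ T.erase k₀, δ + s ≤ v k := by
        intro k hk
        have hkT := Finset.mem_of_mem_erase hk
        have hne' : k ≠ k₀ := Finset.ne_of_mem_erase hk
        have h1 := hsep k hkT k₀ hk₀ hne'
        have h2 := hmin k hkT
        rcases abs_cases (v k - v k₀) with ⟨he, _⟩ | ⟨he, _⟩ <;> linarith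
      have hrec := ih (T.erase k₀) v (δ + s)
        (by rw [Finset.card_erase_of_mem hk₀, hcard]; omega) (by linarith) s hs hstep
        (fun k hk k' hk' h =>
          hsep k (Finset.mem_of_mem_erase hk) k' (Finset.mem_of_mem_erase hk') h)
      rw [← Finset.add_sum_erase T _ hk₀, Finset.sum_range_succ']
      have h1 : (v k₀)⁻¹ ≤ δ⁻¹ := inv_anti₀ hδ hv0
      have h3 : ∑ j ∈ Finset.range n, (δ + s + (j:ℝ) * s)⁻¹ =
          ∑ j ∈ Finset.range n, (δ + (↑(j + 1):ℝ) * s)⁻¹ := by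
        refine Finset.sum_congr rfl fun j _ => ?_
        push_cast
        ring_nf
      rw [h3] at hrec
      push_cast
      calc (v k₀)⁻¹ + ∑ k ∈ T.erase k₀, (v k)⁻¹
          ≤ δ⁻¹ + ∑ j ∈ Finset.range n, (δ + ((j:ℝ) + 1) * s)⁻¹ := by
            refine add_le_add h1 (le_trans hrec (le_of_eq ?_))
            push_cast
            rfl
        _ = ∑ j ∈ Finset.range n, (δ + ((j:ℝ) + 1) * s)⁻¹ + (δ + (0:ℝ) * s)⁻¹ := by
            rw [zero_mul, add_zero, add_comm]
        _ ≤ _ := le_rfl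

private lemma sep_sum {ι : Type*} [DecidableEq ι] (N : ℕ) (T : Finset ι) (v : ι → ℝ)
    (δ s : ℝ) (hδ : 0 < δ) (hs : 0 < s) (hcard : T.card ≤ N)
    (hv : ∀ k ∈ T, δ ≤ v k)
    (hsep : ∀ k ∈ T, ∀ k' ∈ T, k ≠ k' → s ≤ |v k - v k'|) :
    ∑ k ∈ T, (v k)⁻¹ ≤ δ⁻¹ + ∑ j ∈ Finset.Icc 1 (N - 1), 1 / ((j : ℝ) * s) := by
  refine le_trans (sep_sum_aux T.card T v δ rfl hδ s hs hv hsep) ?_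
  have hnn : (0:ℝ) ≤ ∑ j ∈ Finset.Icc 1 (N - 1), 1 / ((j : ℝ) * s) := by
    refine Finset.sum_nonneg fun j hj => by positivity
  rcases Nat.eq_zero_or_pos T.card with h | h
  · rw [h]
    simp only [Finset.range_zero, Finset.sum_empty]
    positivity
  obtain ⟨t, ht⟩ := Nat.exists_eq_succ_of_ne_zero (Nat.pos_iff_ne_zero.mp h)
  rw [ht, Finset.sum_range_succ']
  simp only [Nat.cast_zero, zero_mul, add_zero]
  rw [add_comm]
  refine add_le_add le_rfl ?_
  have hstep : ∑ j ∈ Finset.range t, (δ + (↑(j + 1):ℝ) * s)⁻¹ ≤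
      ∑ j ∈ Finset.range t, ((↑(j + 1):ℝ) * s)⁻¹ := by
    refine Finset.sum_le_sum fun j _ => ?_
    have hjs : (0:ℝ) < (↑(j + 1):ℝ) * s := by positivity
    exact inv_anti₀ hjs (by linarith)
  refine le_trans (le_trans (le_of_eq ?_) hstep) ?_
  · push_cast; rfl
  have hre : ∑ j ∈ Finset.range t, ((↑(j + 1):ℝ) * s)⁻¹ =
      ∑ j ∈ Finset.Icc 1 t, 1 / ((j : ℝ) * s) := by
    rw [← Finset.Ico_add_one_right_eq_Icc, Finset.sum_Ico_eq_sum_range]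
    refine Finset.sum_congr rfl fun j _ => ?_
    rw [one_div]
    congr 2
    push_cast
    ring
  rw [hre]
  refine Finset.sum_le_sum_of_subset_of_nonneg ?_ (fun j _ _ => by positivity)
  refine Finset.Icc_subset_Icc le_rfl ?_
  omega

private lemma harmonic_bound (N : ℕ) (s : ℝ) (hs : 0 < s) :
    ∑ k ∈ Finset.Icc 1 (N - 1), 1 / ((k : ℝ) * s) ≤ (1 / s) * (1 + Real.log N) := by
  rcases Nat.lt_or_ge N 2 with hN | hN
  · interval_cases N <;>
      · norm_num [Real.log_zero, Real.log_one]
        positivity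
  · have h1 : ∑ k ∈ Finset.Icc 1 (N - 1), 1 / ((k : ℝ) * s) =
        (1 / s) * ∑ k ∈ Finset.Icc 1 (N - 1), ((k : ℝ))⁻¹ := by
      rw [Finset.mul_sum]
      refine Finset.sum_congr rfl fun k _ => ?_
      rw [one_div, one_div, mul_inv]
      ring
    have h2 : ∑ k ∈ Finset.Icc 1 (N - 1), ((k : ℝ))⁻¹ = ((harmonic (N - 1) : ℚ) : ℝ) := by
      rw [harmonic_eq_sum_Icc]
      push_cast
      rfl
    have h3 : ((harmonic (N - 1) : ℚ) : ℝ) ≤ 1 + Real.log (N - 1 : ℕ) :=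
      harmonic_le_one_add_log _
    have h4 : Real.log ((N - 1 : ℕ) : ℝ) ≤ Real.log N := by
      refine Real.log_le_log (by exact_mod_cast Nat.sub_pos_of_lt (by omega)) ?_
      exact_mod_cast Nat.sub_le N 1
    rw [h1, h2]
    have hsinv : (0:ℝ) ≤ 1 / s := by positivity
    exact mul_le_mul_of_nonneg_left (by linarith) hsinv

theorem stmt16 (N : ℕ) (l r : Fin N → ℝ) (δ s : ℝ) (hδ : 0 < δ) (hs : 0 < s)
    (hbound : ∀ k, δ ≤ l k ∧ l k < r k ∧ r k ≤ 1 - δ)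
    (hdisj : ∀ k k', k ≠ k' →
      Disjoint (Set.Ico (l k) (r k)) (Set.Ico (l k') (r k')))
    (hlsep : ∀ k k', k ≠ k' → s ≤ |l k - l k'|)
    (hrsep : ∀ k k', k ≠ k' → s ≤ |r k - r k'|)
    (E : Set ℝ) (hE : E = ⋃ k, Set.Ico (l k) (r k))
    (f : ℝ → ℝ)
    (hf : f = fun x => if x ∈ E then ‖((x : ℝ) : AddCircle (1:ℝ))‖⁻¹ else 0) :
    eVariationOn f (Set.Icc 0 1) ≤
        ENNReal.ofReal (4 / δ + 4 * ∑ k ∈ Finset.Icc 1 (N - 1), 1 / ((k : ℝ) * s)) ∧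
      4 / δ + 4 * ∑ k ∈ Finset.Icc 1 (N - 1), 1 / ((k : ℝ) * s) ≤
        4 / δ + (4 / s) * (1 + Real.log N) := by
  constructor
  · -- the variation bound
    set F : Fin N → ℝ → ℝ :=
      fun k x => if x ∈ Set.Ico (l k) (r k) then ‖((x : ℝ) : AddCircle (1:ℝ))‖⁻¹ else 0
      with hFdef
    have hfsum : f = fun x => ∑ k ∈ Finset.univ, F k x := by
      funext x
      simp only [hf]
      by_cases hx : x ∈ E
      · rw [if_pos hx]
        rw [hE] at hx
        obtain ⟨k, hk⟩ := Set.mem_iUnion.mp hx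
        rw [Finset.sum_eq_single k]
        · exact (if_pos hk).symm
        · intro k' _ hk'
          exact if_neg fun hx' => absurd hk (Set.disjoint_left.mp (hdisj k' k hk') hx')
        · intro h
          exact absurd (Finset.mem_univ k) h
      · rw [if_neg hx]
        refine (Finset.sum_eq_zero fun k _ => ?_).symm
        exact if_neg fun hx' => hx (hE ▸ Set.mem_iUnion.mpr ⟨k, hx'⟩)
    have hvar : eVariationOn f (Set.Icc 0 1) ≤
        ∑ k ∈ Finset.univ, eVariationOn (F k) (Set.Icc 0 1) := by
      rw [hfsum]
      exact evar_sum_le _ _ _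
    set c : Fin N → ℝ := fun k => if l k ≤ 1/2 then (l k)⁻¹ else 0 with hcdef
    set d : Fin N → ℝ := fun k => if 1/2 ≤ r k then (1 - r k)⁻¹ else 0 with hddef
    have hcnn : ∀ k, 0 ≤ c k := fun k => by
      have h1 := (hbound k).1
      have h0 : 0 < l k := lt_of_lt_of_le hδ h1
      rw [hcdef]; dsimp only
      split
      · positivity
      · exact le_rfl
    have hdnn : ∀ k, 0 ≤ d k := fun k => by
      have h1 := (hbound k).2.2
      have h0 : 0 < 1 - r k := by linarith
      rw [hddef]; dsimp only
      split
      · positivity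
      · exact le_rfl
    have hbd : ∀ k, eVariationOn (F k) (Set.Icc 0 1) ≤ ENNReal.ofReal (2 * (c k + d k)) := by
      intro k
      obtain ⟨h1, h2, h3⟩ := hbound k
      exact varIco (l k) (r k) (lt_of_lt_of_le hδ h1) h2 (by linarith)
    have hsum2 : ∑ k ∈ Finset.univ, eVariationOn (F k) (Set.Icc 0 1) ≤
        ENNReal.ofReal (∑ k ∈ Finset.univ, 2 * (c k + d k)) := by
      rw [ENNReal.ofReal_sum_of_nonneg fun k _ => by linarith [hcnn k, hdnn k]]
      exact Finset.sum_le_sum fun k _ => hbd k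
    refine le_trans hvar (le_trans hsum2 (ENNReal.ofReal_le_ofReal ?_))
    -- now the real arithmetic
    have hC : ∑ k ∈ Finset.univ, c k ≤
        δ⁻¹ + ∑ j ∈ Finset.Icc 1 (N - 1), 1 / ((j : ℝ) * s) := by
      have hCeq : ∑ k ∈ Finset.univ, c k =
          ∑ k ∈ Finset.univ.filter (fun k => l k ≤ 1/2), (l k)⁻¹ := by
        rw [Finset.sum_filter]
      rw [hCeq]
      refine sep_sum N _ l δ s hδ hs ?_ (fun k _ => (hbound k).1)
        (fun k _ k' _ h => hlsep k k' h)
      exact le_trans (Finset.card_filter_le _ _) (by simp)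
    have hD : ∑ k ∈ Finset.univ, d k ≤
        δ⁻¹ + ∑ j ∈ Finset.Icc 1 (N - 1), 1 / ((j : ℝ) * s) := by
      have hDeq : ∑ k ∈ Finset.univ, d k =
          ∑ k ∈ Finset.univ.filter (fun k => 1/2 ≤ r k), (1 - r k)⁻¹ := by
        rw [Finset.sum_filter]
      rw [hDeq]
      refine sep_sum N _ (fun k => 1 - r k) δ s hδ hs ?_
        (fun k _ => by show δ ≤ 1 - r k; linarith [(hbound k).2.2]) ?_
      · exact le_trans (Finset.card_filter_le _ _) (by simp)
      · intro k _ k' _ h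
        have := hrsep k k' h
        rw [show (1 - r k) - (1 - r k') = -(r k - r k') by ring, abs_neg]
        exact this
    have hsplit : ∑ k ∈ Finset.univ, 2 * (c k + d k) =
        2 * (∑ k ∈ Finset.univ, c k) + 2 * (∑ k ∈ Finset.univ, d k) := by
      simp only [mul_add]
      rw [Finset.sum_add_distrib, ← Finset.mul_sum, ← Finset.mul_sum]
    rw [hsplit]
    have h4δ : 4 / δ = 4 * δ⁻¹ := by ring
    rw [h4δ]
    linarith
  · -- the logarithmic bound
    have := harmonic_bound N s hs
    have h4 : (4:ℝ) / s = 4 * (1 / s) := by ring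
    rw [h4]
    linarith
end
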